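/- arXiv:0709.2700 — 4 statements merged into one kernel-verified Lean document; each statement's English description precedes it below -/
import Mathlib

section
/- On the vertex set of a connected finite simplicial graph Γ, the relation defined by v ≤ w iff lk(v) ⊆ st(w) is transitive. -/
open SimpleGraph

namespace RaagPaper

variable {V : Type*}

/-- The link of a vertex: the set of vertices adjacent to it. -/
def lk (G : SimpleGraph V) (v : V) : Set V := G.neighborSet v

/-- The (closed) star of a vertex: `st(v) = lk(v) ∪ {v}`. -/
def st (G : SimpleGraph V) (v : V) : Set V := insert v (G.neighborSet v)

/-- The preorder on vertices: `v ≤ w` iff `lk(v) ⊆ st(w)`. -/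
def vle (G : SimpleGraph V) (v w : V) : Prop := lk G v ⊆ st G w

/-- Equivalence of vertices: `v ∼ w` iff `v ≤ w` and `w ≤ v`. -/
def vequiv (G : SimpleGraph V) (v w : V) : Prop := vle G v w ∧ vle G w v

/-- The equivalence class `[v]` of a vertex `v`. -/
def cls (G : SimpleGraph V) (v : V) : Set V := {u | vequiv G u v}

/-- `[v]` is maximal with respect to the partial order induced by `≤`. -/
def IsMaximalClass (G : SimpleGraph V) (v : V) : Prop := ∀ w, vle G v w → vle G w v

/-- `L_[v] = lk(v) \ [v]`. -/
def Lset (G : SimpleGraph V) (v : V) : Set V := lk G v \ cls G v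

/-- `J_[v] = [v] ∪ L_[v]`, the join associated to `[v]`. -/
def Jset (G : SimpleGraph V) (v : V) : Set V := cls G v ∪ Lset G v

/-- `v ∈ V_ab` : any two distinct vertices of `[v]` are adjacent (so `A_[v]` is abelian). -/
def Vab (G : SimpleGraph V) (v : V) : Prop :=
  ∀ x ∈ cls G v, ∀ y ∈ cls G v, x ≠ y → G.Adj x y

section

variable {G : SimpleGraph V}

theorem mem_lk_iff {v w : V} : v ∈ lk G w ↔ G.Adj w v := Iff.rfl

theorem mem_st_iff {v w : V} : v ∈ st G w ↔ v = w ∨ G.Adj w v := Set.mem_insert_iff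

/-- The only point of `lk u` that need not lie in `lk v`: bounce through `u ∈ lk v ⊆ st w` and,
if `u ≠ w`, through `w ∈ lk u ⊆ st v`. -/
theorem mem_st_of_adj_of_vle_of_vle {u v w : V} (hadj : G.Adj u v) (huv : vle G u v)
    (hvw : vle G v w) : v ∈ st G w := by
  rcases mem_st_iff.1 (hvw (mem_lk_iff.2 hadj.symm)) with rfl | hwu
  · exact mem_st_iff.2 (Or.inr hadj)
  · rcases mem_st_iff.1 (huv (mem_lk_iff.2 hwu.symm)) with rfl | hvw_adj
    · exact mem_st_iff.2 (Or.inl rfl)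
    · exact mem_st_iff.2 (Or.inr hvw_adj.symm)

end

theorem vle_transitive_general {V : Type*} (G : SimpleGraph V) :
    Transitive (vle G) := by
  intro u v w huv hvw x hux
  rcases mem_st_iff.1 (huv hux) with rfl | hvx
  · exact mem_st_of_adj_of_vle_of_vle (mem_lk_iff.1 hux) huv hvw
  · exact hvw hvx

/-- the relation `v ≤ w ↔ lk(v) ⊆ st(w)` is transitive. -/
theorem vle_transitive {V : Type*} [Fintype V] [Nonempty V] (G : SimpleGraph V)
    (hconn : G.Connected) :
    Transitive (vle G) :=
  vle_transitive_general G

end RaagPaper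
end

section
/- Let Γ be a connected finite simplicial graph with at least two vertices and let v, w be vertices. Then lk(v) ⊆ st(w) holds if and only if exactly one of the following holds: (1) v = w; (2) d(v,w) = 1 and st(v) ⊆ st(w); (3) d(v,w) = 2 and lk(v) ⊆ lk(w). -/
open SimpleGraph

namespace RaagPaper

variable {V : Type*}

/-! In a connected graph with at least two vertices every vertex `v` has a neighbour `u`. If `v` and
`w` are not adjacent, `lk(v) ⊆ st(w)` is the same as `lk(v) ⊆ lk(w)`, and then `u` is a common
neighbour of `v` and `w`, forcing `d(v,w) = 2`; if they are adjacent, `lk(v) ⊆ st(w)` is the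
same as `st(v) ⊆ st(w)`. The three cases are told apart by `d(v,w) ∈ {0, 1, 2}`. -/

section

variable {G : SimpleGraph V} {u v w : V}

lemma vle_refl (v : V) : vle G v v := Set.subset_insert v _

lemma vle_iff_st_subset_st (h : G.Adj v w) : vle G v w ↔ st G v ⊆ st G w :=
  ⟨Set.insert_subset (Set.mem_insert_of_mem w h.symm), (Set.subset_insert v _).trans⟩

lemma vle_iff_lk_subset_lk (h : ¬G.Adj v w) : vle G v w ↔ lk G v ⊆ lk G w := by
  refine ⟨fun hle x hx => ?_, fun hlk => hlk.trans (Set.subset_insert w _)⟩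
  rcases hle hx with rfl | hx'
  · exact absurd hx h
  · exact hx'

lemma dist_eq_two_of_lk_subset_lk (hne : v ≠ w) (hu : G.Adj v u) (h : lk G v ⊆ lk G w) :
    G.dist v w = 2 := by
  have hnadj : ¬G.Adj v w := fun hvw => (h hvw).ne rfl
  have hcommon : u ∈ G.commonNeighbors v w := G.mem_commonNeighbors.mpr ⟨hu, h hu⟩
  rw [SimpleGraph.dist, ENat.toNat_eq_iff two_ne_zero]
  exact G.edist_eq_two_iff.mpr ⟨hne, hnadj, u, hcommon⟩

end

theorem vle_iff_trichotomy_general {V : Type*} [Nontrivial V] (G : SimpleGraph V)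
    (hconn : G.Connected) (v w : V) :
    vle G v w ↔
      ((v = w ∧ ¬(G.dist v w = 1 ∧ st G v ⊆ st G w) ∧ ¬(G.dist v w = 2 ∧ lk G v ⊆ lk G w)) ∨
       (v ≠ w ∧ (G.dist v w = 1 ∧ st G v ⊆ st G w) ∧ ¬(G.dist v w = 2 ∧ lk G v ⊆ lk G w)) ∨
       (v ≠ w ∧ ¬(G.dist v w = 1 ∧ st G v ⊆ st G w) ∧ (G.dist v w = 2 ∧ lk G v ⊆ lk G w))) := by
  obtain ⟨u, hu⟩ := hconn.preconnected.exists_adj_of_nontrivial v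
  by_cases hvw : v = w
  · subst hvw
    simp [vle_refl]
  by_cases hadj : G.Adj v w
  · have hd : G.dist v w = 1 := dist_eq_one_iff_adj.mpr hadj
    simp [hvw, hd, vle_iff_st_subset_st hadj]
  · have hd : G.dist v w ≠ 1 := mt dist_eq_one_iff_adj.mp hadj
    rw [vle_iff_lk_subset_lk hadj]
    have hdist := dist_eq_two_of_lk_subset_lk (G := G) hvw hu
    simp only [hvw, hd]
    tauto

/-- `lk(v) ⊆ st(w)` iff exactly one of the following holds:
(1) `v = w`; (2) `d(v,w) = 1` and `st(v) ⊆ st(w)`; (3) `d(v,w) = 2` and `lk(v) ⊆ lk(w)`. -/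
theorem vle_iff_trichotomy {V : Type*} [Fintype V] [Nontrivial V] (G : SimpleGraph V)
    (hconn : G.Connected) (v w : V) :
    vle G v w ↔
      ((v = w ∧ ¬(G.dist v w = 1 ∧ st G v ⊆ st G w) ∧ ¬(G.dist v w = 2 ∧ lk G v ⊆ lk G w)) ∨
       (v ≠ w ∧ (G.dist v w = 1 ∧ st G v ⊆ st G w) ∧ ¬(G.dist v w = 2 ∧ lk G v ⊆ lk G w)) ∨
       (v ≠ w ∧ ¬(G.dist v w = 1 ∧ st G v ⊆ st G w) ∧ (G.dist v w = 2 ∧ lk G v ⊆ lk G w))) :=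
  vle_iff_trichotomy_general G hconn v w

end RaagPaper
end

section
/- Let Γ be a connected finite simplicial graph and v a vertex. Then either every two distinct vertices of the equivalence class [v] are at distance 1 from each other, or every two distinct vertices of [v] are at distance 2 from each other; in particular all pairs of distinct elements of [v] are at the same distance. -/
/-!
Since `[v]` is an equivalence class of the preorder `≤`, any two of its members `x, y` satisfy
`lk(x) ⊆ st(y)`. Hence a single edge inside `[v]` propagates to every pair of distinct members,
making `[v]` a clique. Otherwise `[v]` is independent, and for distinct `a, b ∈ [v]` any neighbour
of `a` (one exists because `Γ` is connected) lies in `st(b)` but is not `b`, so it is a common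
neighbour and `d(a, b) = 2`.
-/

open SimpleGraph

namespace RaagPaper

variable {V : Type*}

variable {G : SimpleGraph V}

lemma adj_of_vle {x y z : V} (hxz : vle G x z) (hxy : G.Adj x y) (hyz : y ≠ z) : G.Adj z y := by
  rcases hxz hxy with h | h
  · exact absurd h hyz
  · exact h

lemma vle_trans {a b c : V} (hab : vle G a b) (hbc : vle G b c) : vle G a c := by
  intro z (haz : G.Adj a z)
  by_cases hzb : z = b
  · subst hzb
    by_cases hzc : z = c
    · exact Or.inl hzc
    refine Or.inr ?_
    by_cases hac : a = c
    · exact hac ▸ haz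
    have hca : G.Adj c a := adj_of_vle hbc haz.symm hac
    exact (adj_of_vle hab hca.symm (Ne.symm hzc)).symm
  · exact hbc (adj_of_vle hab haz hzb)

lemma vle_of_mem_cls {v x y : V} (hx : x ∈ cls G v) (hy : y ∈ cls G v) : vle G x y :=
  vle_trans hx.1 hy.2

lemma adj_of_mem_cls_of_adj {v x y a b : V} (hx : x ∈ cls G v) (hy : y ∈ cls G v)
    (hxy : G.Adj x y) (ha : a ∈ cls G v) (hb : b ∈ cls G v) (hab : a ≠ b) : G.Adj a b := by
  by_cases hay : a = y
  · subst hay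
    exact (adj_of_vle (vle_of_mem_cls hx hb) hxy hab).symm
  have hya : G.Adj y a := adj_of_vle (vle_of_mem_cls hx ha) hxy (Ne.symm hay) |>.symm
  exact (adj_of_vle (vle_of_mem_cls hy hb) hya hab).symm

lemma dist_eq_two_of_mem_cls_of_not_adj (hconn : G.Connected) {v a b : V} (ha : a ∈ cls G v)
    (hb : b ∈ cls G v) (hab : a ≠ b) (hnadj : ¬G.Adj a b) : G.dist a b = 2 := by
  have : Nontrivial V := ⟨⟨a, b, hab⟩⟩
  obtain ⟨z, haz⟩ := hconn.preconnected.exists_adj_of_nontrivial a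
  have hzb : z ≠ b := by rintro rfl; exact hnadj haz
  have hbz : G.Adj b z := adj_of_vle (vle_of_mem_cls ha hb) haz hzb
  have hcommon : z ∈ G.commonNeighbors a b := G.mem_commonNeighbors.mpr ⟨haz, hbz⟩
  rw [SimpleGraph.dist, edist_eq_two_iff.mpr ⟨hab, hnadj, ⟨z, hcommon⟩⟩]
  rfl

theorem cls_constant_distance_general {V : Type*} (G : SimpleGraph V)
    (hconn : G.Connected) (v : V) :
    (∀ x ∈ cls G v, ∀ y ∈ cls G v, x ≠ y → G.dist x y = 1) ∨
    (∀ x ∈ cls G v, ∀ y ∈ cls G v, x ≠ y → G.dist x y = 2) := by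
  by_cases hedge : ∃ x ∈ cls G v, ∃ y ∈ cls G v, G.Adj x y
  · obtain ⟨x, hx, y, hy, hxy⟩ := hedge
    exact Or.inl fun a ha b hb hab ↦
      dist_eq_one_iff_adj.mpr (adj_of_mem_cls_of_adj hx hy hxy ha hb hab)
  · push Not at hedge
    exact Or.inr fun a ha b hb hab ↦
      dist_eq_two_of_mem_cls_of_not_adj hconn ha hb hab (hedge a ha b hb)

/-- all pairs of distinct elements of an equivalence class `[v]` are at the same
distance from each other: either all at distance 1, or all at distance 2. -/
theorem cls_constant_distance {V : Type*} [Fintype V] [Nonempty V] (G : SimpleGraph V)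
    (hconn : G.Connected) (v : V) :
    (∀ x ∈ cls G v, ∀ y ∈ cls G v, x ≠ y → G.dist x y = 1) ∨
    (∀ x ∈ cls G v, ∀ y ∈ cls G v, x ≠ y → G.dist x y = 2) :=
  cls_constant_distance_general G hconn v

end RaagPaper
end

section
/- Let Γ be a connected finite simplicial graph, A_Γ the associated right-angled Artin group, and let [v], [w] be distinct maximal equivalence classes with v adjacent to w in Γ. Let J_{v,w} = J_[v] ∩ J_[w]. Then the normalizer of A_{J_{v,w}} in A_Γ equals A_{J_{v,w}}, and the centralizer of A_{J_{v,w}} in A_Γ equals the center of the group A_{J_{v,w}}, which equals A_T where T = {u ∈ J_{v,w} : every vertex t ∈ J_{v,w} with t ≠ u is adjacent to u}. -/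
open SimpleGraph

namespace RaagPaper

variable {V : Type*}

/-- The commutator relations defining the right-angled Artin group of `G`. -/
def raagRels (G : SimpleGraph V) : Set (FreeGroup V) :=
  {r | ∃ u w : V, G.Adj u w ∧
    r = FreeGroup.of u * FreeGroup.of w * (FreeGroup.of u)⁻¹ * (FreeGroup.of w)⁻¹}

/-- The right-angled Artin group `A_Γ`. -/
abbrev Raag (G : SimpleGraph V) : Type _ := PresentedGroup (raagRels G)

/-- The generator of `A_Γ` corresponding to a vertex. -/
def gen (G : SimpleGraph V) (v : V) : Raag G := PresentedGroup.of v

/-- The special subgroup `A_Θ` generated by a set `Θ` of vertices. -/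
def Asub (G : SimpleGraph V) (Θ : Set V) : Subgroup (Raag G) :=
  Subgroup.closure (gen G '' Θ)

/-- The subgroup of inner automorphisms of a group. -/
def Inn (A : Type*) [Group A] : Subgroup (MulAut A) := (MulAut.conj : A →* MulAut A).range

instance (A : Type*) [Group A] : (Inn A).Normal := by
  constructor
  intro n hn φ
  obtain ⟨g, rfl⟩ := hn
  exact ⟨φ g, by ext x; simp [Inn, MulAut.conj]⟩

/-- The outer automorphism group `Out(A) = Aut(A)/Inn(A)`. -/
abbrev OutG (A : Type*) [Group A] : Type _ := MulAut A ⧸ Inn A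

/-- The canonical projection `Aut(A) → Out(A)`. -/
def outMk (A : Type*) [Group A] : MulAut A →* OutG A := QuotientGroup.mk' (Inn A)

/-!
Fix a vertex `u`. Then `A_Γ` is the amalgam `A_{V ∖ u} *_{A_{lk u}} A_{st u}`, and in an amalgam
with injective edge maps an element `x ∉ G_j` conjugating a subgroup `K ≤ G_j` back into `G_j`
conjugates `K` into the edge group: write `x = g₁ l g₂` with `g₁, g₂ ∈ G_j` and `l` a reduced word
neither starting nor ending in `G_j`; if `g₂ k g₂⁻¹` were outside the edge group, then
`l (g₂ k g₂⁻¹) l⁻¹` would be a reduced word of length at least three, which cannot lie in `G_j`.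

For `K = ⟨u⟩ ≤ A_{st u}` this shows that the centralizer of `u` is `A_{st u}`. For
`K = A_Θ ≤ A_{V ∖ u}` it shows that an element normalizing `A_Θ` but not in `A_{V ∖ u}` conjugates
`A_Θ` into `A_{lk u}`, which forces `Θ ⊆ lk u` by counting exponents. As retractions make special
subgroups closed under intersection, the centralizer of `A_Θ` is `A_{⋂_{t ∈ Θ} st t}` and its
normalizer lies in `A_{Θ ∪ {u | Θ ⊆ lk u}}`. For `Θ = J_{v,w}` with `v` adjacent to `w` both vertex
sets collapse to the claimed ones, because `st v ∩ st w ⊆ J_{v,w}`.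
-/

namespace Amalgam

open Monoid PushoutI

variable {ι H : Type*} {G : ι → Type*} [Group H] [∀ i, Group (G i)] (φ : ∀ i, H →* G i)

def IsReduced (l : List (Σ i, G i)) : Prop :=
  (∀ p ∈ l, p.2 ∉ (φ p.1).range) ∧ l.IsChain fun a b => a.1 ≠ b.1

def listProd (l : List (Σ i, G i)) : PushoutI φ :=
  (l.map fun p => of p.1 p.2).prod

@[simp] theorem listProd_nil : listProd φ ([] : List (Σ i, G i)) = 1 := rfl

@[simp] theorem listProd_cons (p : Σ i, G i) (l : List (Σ i, G i)) :
    listProd φ (p :: l) = of p.1 p.2 * listProd φ l := List.prod_cons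

@[simp] theorem listProd_append (l m : List (Σ i, G i)) :
    listProd φ (l ++ m) = listProd φ l * listProd φ m := by
  simp [listProd]

def invRev (l : List (Σ i, G i)) : List (Σ i, G i) :=
  l.reverse.map fun p => ⟨p.1, p.2⁻¹⟩

@[simp] theorem listProd_invRev (l : List (Σ i, G i)) :
    listProd φ (invRev l) = (listProd φ l)⁻¹ := by
  induction l with
  | nil => rfl
  | cons p l ih => simp_all [invRev]

theorem ofCoprodI_word_prod (w : CoprodI.Word G) :
    ofCoprodI (φ := φ) w.prod = listProd φ w.toList := by
  simp [CoprodI.Word.prod, listProd, map_list_prod, Function.comp_def]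

variable {φ}

theorem IsReduced.tail {p : Σ i, G i} {l : List (Σ i, G i)} (hl : IsReduced φ (p :: l)) :
    IsReduced φ l :=
  ⟨fun q hq => hl.1 q (List.mem_cons_of_mem p hq), hl.2.tail⟩

theorem IsReduced.dropLast {l : List (Σ i, G i)} {p : Σ i, G i} (hl : IsReduced φ (l ++ [p])) :
    IsReduced φ l :=
  ⟨fun q hq => hl.1 q (List.mem_append_left _ hq), (List.isChain_append.1 hl.2).1⟩

theorem IsReduced.invRev {l : List (Σ i, G i)} (hl : IsReduced φ l) :
    IsReduced φ (Amalgam.invRev l) := by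
  refine ⟨?_, ?_⟩
  · simp only [Amalgam.invRev, List.mem_map, List.mem_reverse]
    rintro _ ⟨p, hp, rfl⟩
    simpa using hl.1 p hp
  · simpa [Amalgam.invRev, List.isChain_map, List.isChain_reverse, ne_comm] using hl.2

theorem IsReduced.append_cons_invRev {l : List (Σ i, G i)} (hl : IsReduced φ l) {j : ι}
    {c : G j} (hc : c ∉ (φ j).range) (hlast : ∀ p ∈ l.getLast?, p.1 ≠ j) :
    IsReduced φ (l ++ ⟨j, c⟩ :: Amalgam.invRev l) := by
  refine ⟨?_, List.isChain_append.2 ⟨hl.2, hl.invRev.2.cons ?_, ?_⟩⟩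
  · simp only [List.mem_append, List.mem_cons]
    rintro p (hp | rfl | hp)
    exacts [hl.1 p hp, hc, hl.invRev.1 p hp]
  · simp only [Amalgam.invRev, List.head?_map, List.head?_reverse, Option.mem_def,
      Option.map_eq_some_iff]
    rintro _ ⟨p, hp, rfl⟩
    exact (hlast p hp).symm
  · simpa using hlast

def IsReduced.toWord {l : List (Σ i, G i)} (hl : IsReduced φ l) : CoprodI.Word G :=
  ⟨l, fun p hp h1 => hl.1 p hp (h1 ▸ one_mem _), hl.2⟩

variable (φ)

theorem listProd_not_mem_base_range (hφ : ∀ i, Function.Injective (φ i))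
    {l : List (Σ i, G i)} (hl : IsReduced φ l) (hne : l ≠ []) :
    listProd φ l ∉ (base φ).range := by
  intro h
  have := (show Reduced φ hl.toWord from hl.1).eq_empty_of_mem_range hφ
    (by rwa [ofCoprodI_word_prod])
  exact hne (congrArg CoprodI.Word.toList this)

theorem listProd_not_mem_of_range (hφ : ∀ i, Function.Injective (φ i))
    {l : List (Σ i, G i)} (hl : IsReduced φ l) (hne : l ≠ []) {i : ι}
    (hhead : ∀ p ∈ l.head?, p.1 ≠ i) :
    listProd φ l ∉ (of i).range := by
  rintro ⟨g, hg⟩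
  by_cases hgφ : g ∈ (φ i).range
  · obtain ⟨h, rfl⟩ := hgφ
    exact listProd_not_mem_base_range φ hφ hl hne ⟨h, by rw [← hg, of_apply_eq_base]⟩
  · have hred : IsReduced φ (⟨i, g⁻¹⟩ :: l) :=
      ⟨List.forall_mem_cons.2 ⟨by simpa using hgφ, hl.1⟩,
        hl.2.cons fun p hp => (hhead p hp).symm⟩
    exact listProd_not_mem_base_range φ hφ hred (List.cons_ne_nil _ _) ⟨1, by simp [hg]⟩

theorem eq_one_of_mem_set_of_mem_range (d : NormalWord.Transversal φ) {i : ι} {g : G i}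
    (hg : g ∈ d.set i) (hr : g ∈ (φ i).range) : g = 1 := by
  have := (d.compl i).1 (a₁ := (⟨⟨g, hr⟩, ⟨1, d.one_mem i⟩⟩)) (a₂ := ⟨⟨1, one_mem _⟩, ⟨g, hg⟩⟩)
    (by simp)
  exact congrArg (fun x => x.1.1) this

theorem exists_eq_base_mul_listProd (hφ : ∀ i, Function.Injective (φ i)) (x : PushoutI φ) :
    ∃ (h : H) (l : List (Σ i, G i)), IsReduced φ l ∧ x = base φ h * listProd φ l := by
  classical
  obtain ⟨d⟩ := NormalWord.transversal_nonempty φ hφ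
  let w := NormalWord.equiv (d := d) x
  refine ⟨w.head, w.toList, ⟨?_, w.chain_ne⟩, ?_⟩
  · rintro ⟨i, g⟩ hp hr
    exact w.ne_one _ hp (eq_one_of_mem_set_of_mem_range φ d (w.normalized i g hp) hr)
  · rw [← ofCoprodI_word_prod, ← NormalWord.prod]
    exact (NormalWord.equiv.symm_apply_apply x).symm

theorem exists_eq_of_mul_listProd_mul_of (hφ : ∀ i, Function.Injective (φ i)) (j : ι)
    (x : PushoutI φ) :
    ∃ (g₁ : G j) (l : List (Σ i, G i)) (g₂ : G j), IsReduced φ l ∧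
      (∀ p ∈ l.head?, p.1 ≠ j) ∧ (∀ p ∈ l.getLast?, p.1 ≠ j) ∧
      x = of j g₁ * listProd φ l * of j g₂ := by
  classical
  -- a shortest such expression cannot start or end with a letter from `G j`
  have hex : ∃ n, ∃ (g₁ : G j) (l : List (Σ i, G i)) (g₂ : G j), l.length = n ∧
      IsReduced φ l ∧ x = of j g₁ * listProd φ l * of j g₂ := by
    obtain ⟨h, l, hl, rfl⟩ := exists_eq_base_mul_listProd φ hφ x
    exact ⟨_, φ j h, l, 1, rfl, hl, by simp [of_apply_eq_base]⟩
  obtain ⟨g₁, l, g₂, hlen, hl, rfl⟩ := Nat.find_spec hex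
  refine ⟨g₁, l, g₂, hl, ?_, ?_, rfl⟩
  · rintro ⟨i, a⟩ hp rfl
    obtain ⟨l', rfl⟩ := List.head?_eq_some_iff.1 hp
    refine Nat.find_min hex (m := l'.length) (by rw [← hlen]; simp)
      ⟨g₁ * a, l', g₂, rfl, hl.tail, ?_⟩
    simp [mul_assoc]
  · rintro ⟨i, a⟩ hp rfl
    obtain ⟨l', rfl⟩ := List.getLast?_eq_some_iff.1 hp
    refine Nat.find_min hex (m := l'.length) (by rw [← hlen]; simp)
      ⟨g₁, l', a * g₂, rfl, hl.dropLast, ?_⟩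
    simp [mul_assoc]

theorem exists_conj_mem_base_range (hφ : ∀ i, Function.Injective (φ i)) {j : ι}
    {K : Subgroup (PushoutI φ)} (hK : K ≤ (of j).range) {x : PushoutI φ}
    (hx : x ∉ (of j).range) (hxK : ∀ k ∈ K, x * k * x⁻¹ ∈ (of j).range) :
    ∃ c : PushoutI φ, ∀ k ∈ K, c * k * c⁻¹ ∈ (base φ).range := by
  obtain ⟨g₁, l, g₂, hl, hhead, hlast, rfl⟩ := exists_eq_of_mul_listProd_mul_of φ hφ j x
  have hne : l ≠ [] := by
    rintro rfl
    exact hx ⟨g₁ * g₂, by simp⟩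
  refine ⟨of j g₂, fun k hk => ?_⟩
  obtain ⟨c, rfl⟩ := hK hk
  by_contra hc
  have hc' : g₂ * c * g₂⁻¹ ∉ (φ j).range := by
    rintro ⟨h, hh⟩
    exact hc ⟨h, by simp [← of_apply_eq_base φ j, hh]⟩
  refine listProd_not_mem_of_range φ hφ (hl.append_cons_invRev hc' hlast) (by simp)
    (by rwa [List.head?_append_of_ne_nil _ hne]) ?_
  have hg₁ (g : G j) : of j g ∈ (of (φ := φ) j).range := ⟨g, rfl⟩
  have := Subgroup.mul_mem _ (Subgroup.mul_mem _ (hg₁ g₁⁻¹) (hxK _ hk)) (hg₁ g₁)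
  convert this using 1
  simp [mul_assoc]

end Amalgam

section Raag

variable {G : SimpleGraph V}

theorem mem_st {t x : V} : x ∈ st G t ↔ x = t ∨ G.Adj t x := Iff.rfl

theorem gen_commute {u w : V} (h : G.Adj u w) : Commute (gen G u) (gen G w) := by
  rw [← commutatorElement_eq_one_iff_commute]
  simpa [commutatorElement_def, gen, PresentedGroup.of] using
    PresentedGroup.one_of_mem (rels := raagRels G) ⟨u, w, h, rfl⟩

def raagLift {A : Type*} [Group A] (f : V → A)
    (hf : ∀ u w, G.Adj u w → Commute (f u) (f w)) : Raag G →* A :=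
  PresentedGroup.toGroup (f := f) <| by
    rintro _ ⟨u, w, huw, rfl⟩
    simp [(hf u w huw).eq]

@[simp] theorem raagLift_gen {A : Type*} [Group A] (f : V → A)
    (hf : ∀ u w, G.Adj u w → Commute (f u) (f w)) (v : V) :
    raagLift f hf (gen G v) = f v :=
  PresentedGroup.toGroup.of _

theorem Asub_mono {S T : Set V} (h : S ⊆ T) : Asub G S ≤ Asub G T :=
  Subgroup.closure_mono (Set.image_mono h)

theorem gen_mem_Asub {S : Set V} {v : V} (h : v ∈ S) : gen G v ∈ Asub G S :=
  Subgroup.subset_closure ⟨v, h, rfl⟩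

theorem Asub_univ : Asub G Set.univ = ⊤ := by
  rw [Asub, Set.image_univ]
  exact PresentedGroup.closure_range_of _

open scoped Classical in
noncomputable def retraction (Θ : Set V) : Raag G →* Raag G :=
  raagLift (fun v => if v ∈ Θ then gen G v else 1) fun u w huw => by
    by_cases hu : u ∈ Θ <;> by_cases hw : w ∈ Θ <;> simp [hu, hw, gen_commute huw]

theorem retraction_mem_Asub_inter {S Θ : Set V} {x : Raag G} (hx : x ∈ Asub G S) :
    retraction Θ x ∈ Asub G (S ∩ Θ) := by
  induction hx using Subgroup.closure_induction with
  | mem _ hy =>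
    obtain ⟨v, hv, rfl⟩ := hy
    by_cases hvΘ : v ∈ Θ
    · simpa [retraction, hvΘ] using gen_mem_Asub (G := G) (Set.mem_inter hv hvΘ)
    · simp [retraction, hvΘ]
  | one => simp
  | mul _ _ _ _ ha hb => simpa using mul_mem ha hb
  | inv _ _ ha => simpa using inv_mem ha

theorem retraction_eq_self {Θ : Set V} {x : Raag G} (hx : x ∈ Asub G Θ) :
    retraction Θ x = x := by
  induction hx using Subgroup.closure_induction with
  | mem _ hy =>
    obtain ⟨v, hv, rfl⟩ := hy
    simp [retraction, hv]
  | one => simp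
  | mul _ _ _ _ ha hb => simp [ha, hb]
  | inv _ _ ha => simp [ha]

theorem Asub_inf_le (S T : Set V) : Asub G S ⊓ Asub G T ≤ Asub G (S ∩ T) := by
  rintro x ⟨hxS, hxT⟩
  simpa [retraction_eq_self hxT] using retraction_mem_Asub_inter (Θ := T) hxS

theorem biInf_Asub_le {ι : Type*} {s : Set ι} (hs : s.Finite) (S : ι → Set V) :
    ⨅ i ∈ s, Asub G (S i) ≤ Asub G (⋂ i ∈ s, S i) := by
  induction s, hs using Set.Finite.induction_on with
  | empty => simp [Asub_univ]
  | insert _ _ ih =>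
    rw [iInf_insert, Set.biInter_insert]
    exact (inf_le_inf_left _ ih).trans (Asub_inf_le _ _)

noncomputable def expSum (t : V) : Raag G →* Multiplicative ℤ :=
  open scoped Classical in
  raagLift (fun v => if v = t then Multiplicative.ofAdd 1 else 1) fun _ _ _ => Commute.all _ _

theorem mem_of_conj_gen_mem_Asub {Θ : Set V} {t : V} {c : Raag G}
    (h : c * gen G t * c⁻¹ ∈ Asub G Θ) : t ∈ Θ := by
  by_contra ht
  have hker : Asub G Θ ≤ (expSum t).ker := by
    refine (Subgroup.closure_le _).2 ?_
    rintro _ ⟨v, hv, rfl⟩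
    simp [expSum, show v ≠ t from fun hvt => ht (hvt ▸ hv)]
  have := hker h
  simp [expSum, mul_inv_cancel_comm] at this

end Raag

section VertexSplitting

open Monoid PushoutI

variable (G : SimpleGraph V) (u : V)

/-- Vertex sets of the factors of `A_Γ = A_{V ∖ u} *_{A_{lk u}} A_{st u}` (`true` for the first).
We only use that `Splitting.ofRaag` is a section of `Splitting.toRaag`, not that they are
inverse. -/
def factorSet (b : Bool) : Set V := bif b then {u}ᶜ else st G u

theorem lk_subset_factorSet (b : Bool) : lk G u ⊆ factorSet G u b := by
  cases b
  · exact Set.subset_insert _ _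
  · exact fun _ hx => (G.ne_of_adj hx).symm

def factorIncl (b : Bool) : ↥(Asub G (lk G u)) →* ↥(Asub G (factorSet G u b)) :=
  Subgroup.inclusion (Asub_mono (lk_subset_factorSet G u b))

abbrev Splitting : Type _ := PushoutI (factorIncl G u)

theorem factorIncl_injective (b : Bool) : Function.Injective (factorIncl G u b) :=
  Subgroup.inclusion_injective _

def Splitting.toRaag : Splitting G u →* Raag G :=
  lift (fun b => (Asub G (factorSet G u b)).subtype) (Asub G (lk G u)).subtype fun _ => rfl

@[simp] theorem Splitting.toRaag_of (b : Bool) (y : Asub G (factorSet G u b)) :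
    toRaag G u (of b y) = y :=
  lift_of ..

@[simp] theorem Splitting.toRaag_base (y : Asub G (lk G u)) : toRaag G u (base _ y) = y :=
  lift_base ..

open scoped Classical in
noncomputable def Splitting.genImage (v : V) : Splitting G u :=
  if hv : v = u then of false ⟨gen G v, gen_mem_Asub (by rw [hv]; exact Set.mem_insert u _)⟩
  else of true ⟨gen G v, gen_mem_Asub hv⟩

variable {G u}

theorem Splitting.genImage_eq_of {b : Bool} {v : V} (hv : v ∈ factorSet G u b) :
    genImage G u v = of b ⟨gen G v, gen_mem_Asub hv⟩ := by
  by_cases hvu : v = u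
  · subst hvu
    cases b
    · simp [genImage]
    · exact absurd rfl hv
  · rw [genImage, dif_neg hvu]
    cases b
    · have hlk : v ∈ lk G u := (mem_st.1 hv).resolve_left hvu
      exact (of_apply_eq_base _ true (⟨gen G v, gen_mem_Asub hlk⟩ : Asub G (lk G u))).trans
        (of_apply_eq_base _ false _).symm
    · rfl

theorem exists_factorSet_of_adj {a b : V} (h : G.Adj a b) :
    ∃ c, a ∈ factorSet G u c ∧ b ∈ factorSet G u c := by
  by_cases ha : a = u
  · exact ⟨false, Or.inl ha, Or.inr (ha ▸ h)⟩
  by_cases hb : b = u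
  · exact ⟨false, Or.inr (hb ▸ h.symm), Or.inl hb⟩
  · exact ⟨true, ha, hb⟩

variable (G u)

noncomputable def Splitting.ofRaag : Raag G →* Splitting G u :=
  raagLift (genImage G u) fun a b hab => by
    obtain ⟨c, hac, hbc⟩ := exists_factorSet_of_adj (u := u) hab
    rw [genImage_eq_of hac, genImage_eq_of hbc]
    have hcomm : Commute (⟨gen G a, gen_mem_Asub hac⟩ : Asub G (factorSet G u c))
        ⟨gen G b, gen_mem_Asub hbc⟩ := Subtype.ext (gen_commute hab)
    exact hcomm.map (of (φ := factorIncl G u) c)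

variable {G u}

theorem Splitting.toRaag_ofRaag (x : Raag G) : toRaag G u (ofRaag G u x) = x := by
  suffices (toRaag G u).comp (ofRaag G u) = MonoidHom.id _ from DFunLike.congr_fun this x
  refine PresentedGroup.ext fun v => ?_
  obtain ⟨c, hvc⟩ : ∃ c, v ∈ factorSet G u c := by
    by_cases hv : v = u
    exacts [⟨false, Or.inl hv⟩, ⟨true, hv⟩]
  change toRaag G u (raagLift _ _ (gen G v)) = gen G v
  rw [raagLift_gen, genImage_eq_of hvc, toRaag_of]

theorem Splitting.ofRaag_eq_of {b : Bool} {x : Raag G} (hx : x ∈ Asub G (factorSet G u b)) :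
    ofRaag G u x = of b ⟨x, hx⟩ := by
  induction hx using Subgroup.closure_induction with
  | mem _ hy =>
    obtain ⟨v, hv, rfl⟩ := hy
    exact (raagLift_gen _ _ v).trans (genImage_eq_of hv)
  | one => exact (map_one _).trans (map_one _).symm
  | mul _ _ _ _ ha hb => rw [map_mul, ha, hb, ← map_mul]; rfl
  | inv _ _ ha => rw [map_inv, ha, ← map_inv]; rfl

theorem Splitting.mem_of_ofRaag_mem_range {b : Bool} {x : Raag G}
    (h : ofRaag G u x ∈ (of (φ := factorIncl G u) b).range) : x ∈ Asub G (factorSet G u b) := by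
  obtain ⟨y, hy⟩ := h
  rw [← toRaag_ofRaag x, ← hy, toRaag_of]
  exact y.2

theorem exists_conj_mem_Asub_lk {b : Bool} {K : Subgroup (Raag G)}
    (hK : K ≤ Asub G (factorSet G u b)) {g : Raag G} (hg : g ∉ Asub G (factorSet G u b))
    (hgK : ∀ k ∈ K, g * k * g⁻¹ ∈ Asub G (factorSet G u b)) :
    ∃ c : Raag G, ∀ k ∈ K, c * k * c⁻¹ ∈ Asub G (lk G u) := by
  open Splitting in
  obtain ⟨c, hc⟩ := Amalgam.exists_conj_mem_base_range (factorIncl G u)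
    (factorIncl_injective G u) (K := K.map (ofRaag G u))
    (by rintro _ ⟨k, hk, rfl⟩; exact ⟨_, (ofRaag_eq_of (hK hk)).symm⟩)
    (fun h => hg (mem_of_ofRaag_mem_range h))
    (by
      rintro _ ⟨k, hk, rfl⟩
      rw [← map_inv, ← map_mul, ← map_mul, ofRaag_eq_of (hgK k hk)]
      exact ⟨_, rfl⟩)
  refine ⟨toRaag G u c, fun k hk => ?_⟩
  obtain ⟨y, hy⟩ := hc _ ⟨k, hk, rfl⟩
  have := congrArg (toRaag G u) hy
  rw [map_mul, map_mul, map_inv, toRaag_ofRaag, toRaag_base] at this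
  exact this ▸ y.2

end VertexSplitting

section SpecialSubgroups

variable {G : SimpleGraph V}

theorem mem_Asub_st_of_commute {u : V} {g : Raag G} (hg : Commute g (gen G u)) :
    g ∈ Asub G (st G u) := by
  by_contra hgu
  have hu : Subgroup.zpowers (gen G u) ≤ Asub G (factorSet G u false) :=
    Subgroup.zpowers_le.2 (gen_mem_Asub (Set.mem_insert u _))
  obtain ⟨c, hc⟩ := exists_conj_mem_Asub_lk hu hgu fun k hk => by
    obtain ⟨n, rfl⟩ := Subgroup.mem_zpowers_iff.1 hk
    rw [(hg.zpow_right n).eq, mul_inv_cancel_right]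
    exact hu hk
  exact G.irrefl (mem_of_conj_gen_mem_Asub (hc _ (Subgroup.mem_zpowers _)))

theorem subset_lk_of_mem_normalizer {Θ : Set V} {u : V} (hu : u ∉ Θ) {g : Raag G}
    (hg : g ∈ Subgroup.normalizer (Asub G Θ : Set (Raag G))) (hgu : g ∉ Asub G {u}ᶜ) :
    Θ ⊆ lk G u := by
  have hΘ : Asub G Θ ≤ Asub G (factorSet G u true) :=
    Asub_mono fun x hx hxu => hu (hxu ▸ hx)
  obtain ⟨c, hc⟩ := exists_conj_mem_Asub_lk hΘ hgu fun k hk =>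
    hΘ ((Subgroup.mem_normalizer_iff.1 hg k).1 hk)
  exact fun t ht => mem_of_conj_gen_mem_Asub (hc _ (gen_mem_Asub ht))

theorem centralizer_Asub [Finite V] (Θ : Set V) :
    Subgroup.centralizer (Asub G Θ : Set (Raag G)) = Asub G (⋂ t ∈ Θ, st G t) := by
  refine le_antisymm (fun g hg => biInf_Asub_le (Set.toFinite Θ) _ ?_) ?_
  · simp only [Subgroup.mem_iInf]
    exact fun t ht => mem_Asub_st_of_commute
      (Subgroup.mem_centralizer_iff.1 hg _ (gen_mem_Asub ht)).symm
  · rw [Asub, Asub, Subgroup.centralizer_closure, Subgroup.closure_le]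
    rintro _ ⟨x, hx, rfl⟩ _ ⟨t, ht, rfl⟩
    rcases mem_st.1 (Set.mem_iInter₂.1 hx t ht) with rfl | hxt
    exacts [rfl, (gen_commute hxt).eq]

theorem normalizer_Asub_le [Finite V] (Θ : Set V) :
    Subgroup.normalizer (Asub G Θ : Set (Raag G)) ≤ Asub G (Θ ∪ {u | Θ ⊆ lk G u}) := by
  intro g hg
  suffices g ∈ Asub G (⋂ u ∈ (Θ ∪ {u | Θ ⊆ lk G u})ᶜ, {u}ᶜ) by
    rwa [← Set.compl_iUnion₂, Set.biUnion_of_singleton, compl_compl] at this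
  refine biInf_Asub_le (Set.toFinite _) _ ?_
  simp only [Subgroup.mem_iInf]
  intro u hu
  by_contra hgu
  exact hu (Or.inr (subset_lk_of_mem_normalizer (fun h => hu (Or.inl h)) hg hgu))

end SpecialSubgroups

theorem _root_.Subgroup.map_subtype_center {A : Type*} [Group A] (K : Subgroup A) :
    (Subgroup.center K).map K.subtype = K ⊓ Subgroup.centralizer (K : Set A) := by
  ext x
  rw [Subgroup.mem_map, Subgroup.mem_inf]
  constructor
  · rintro ⟨⟨y, hyK⟩, hyc, rfl⟩
    refine ⟨hyK, Subgroup.mem_centralizer_iff.mpr ?_⟩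
    intro h hh
    exact congrArg Subtype.val ((Subgroup.mem_center_iff.mp hyc) ⟨h, hh⟩)
  · rintro ⟨hxK, hxc⟩
    exact ⟨⟨x, hxK⟩, Subgroup.mem_center_iff.mpr
      (fun z => Subtype.ext (Subgroup.mem_centralizer_iff.mp hxc z z.2)), rfl⟩

theorem st_subset_Jset {G : SimpleGraph V} (v : V) : st G v ⊆ Jset G v := by
  rintro x (rfl | hx)
  · exact Or.inl ⟨Set.subset_insert _ _, Set.subset_insert _ _⟩
  · by_cases hc : x ∈ cls G v
    exacts [Or.inl hc, Or.inr ⟨hx, hc⟩]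

theorem normalizer_centralizer_center_of_adjacent_joins_general {V : Type*} [Fintype V]
    (G : SimpleGraph V) (v w : V) (hadj : G.Adj v w) :
    Subgroup.normalizer (Asub G (Jset G v ∩ Jset G w) : Set (Raag G)) = Asub G (Jset G v ∩ Jset G w) ∧
    Subgroup.centralizer (Asub G (Jset G v ∩ Jset G w) : Set (Raag G))
      = Asub G {u ∈ Jset G v ∩ Jset G w |
          ∀ t ∈ Jset G v ∩ Jset G w, t ≠ u → G.Adj t u} ∧
    (Subgroup.center ↥(Asub G (Jset G v ∩ Jset G w))).map
        (Asub G (Jset G v ∩ Jset G w)).subtype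
      = Asub G {u ∈ Jset G v ∩ Jset G w |
          ∀ t ∈ Jset G v ∩ Jset G w, t ≠ u → G.Adj t u} := by
  set J := Jset G v ∩ Jset G w
  have hstJ : st G v ∩ st G w ⊆ J :=
    Set.inter_subset_inter (st_subset_Jset v) (st_subset_Jset w)
  have hvJ : v ∈ J := hstJ ⟨Or.inl rfl, Or.inr hadj.symm⟩
  have hwJ : w ∈ J := hstJ ⟨Or.inr hadj, Or.inl rfl⟩
  have hT : ⋂ t ∈ J, st G t = {u ∈ J | ∀ t ∈ J, t ≠ u → G.Adj t u} := by
    ext x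
    simp only [Set.mem_iInter₂, mem_st, Set.mem_sep_iff]
    refine ⟨fun hx => ⟨hstJ ⟨hx v hvJ, hx w hwJ⟩, fun t ht htx => (hx t ht).resolve_left htx.symm⟩,
      fun hx t ht => ?_⟩
    by_cases h : x = t
    exacts [Or.inl h, Or.inr (hx.2 t ht (Ne.symm h))]
  have hcent := (centralizer_Asub J).trans (congrArg _ hT)
  refine ⟨le_antisymm ?_ Subgroup.le_normalizer, hcent, ?_⟩
  · exact (normalizer_Asub_le J).trans <| Asub_mono <|
      Set.union_subset subset_rfl fun u hu => hstJ ⟨Or.inr (hu hvJ).symm, Or.inr (hu hwJ).symm⟩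
  · rw [Subgroup.map_subtype_center, hcent, inf_eq_right.2 (Asub_mono (Set.sep_subset _ _))]

/-- for distinct adjacent maximal classes `[v]`, `[w]` and
`J_{v,w} = J_[v] ∩ J_[w]`, the normalizer of `A_{J_{v,w}}` is `A_{J_{v,w}}`, and its
centralizer equals the center of `A_{J_{v,w}}`, which equals `A_T` where `T` is the set of
vertices of `J_{v,w}` adjacent to every other vertex of `J_{v,w}`. -/
theorem normalizer_centralizer_center_of_adjacent_joins {V : Type*} [Fintype V] [Nonempty V]
    (G : SimpleGraph V) (hconn : G.Connected) (v w : V)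
    (hv : IsMaximalClass G v) (hw : IsMaximalClass G w)
    (hne : ¬ vequiv G v w) (hadj : G.Adj v w) :
    Subgroup.normalizer (Asub G (Jset G v ∩ Jset G w) : Set (Raag G)) = Asub G (Jset G v ∩ Jset G w) ∧
    Subgroup.centralizer (Asub G (Jset G v ∩ Jset G w) : Set (Raag G))
      = Asub G {u ∈ Jset G v ∩ Jset G w |
          ∀ t ∈ Jset G v ∩ Jset G w, t ≠ u → G.Adj t u} ∧
    (Subgroup.center ↥(Asub G (Jset G v ∩ Jset G w))).map
        (Asub G (Jset G v ∩ Jset G w)).subtype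
      = Asub G {u ∈ Jset G v ∩ Jset G w |
          ∀ t ∈ Jset G v ∩ Jset G w, t ≠ u → G.Adj t u} :=
  normalizer_centralizer_center_of_adjacent_joins_general G v w hadj

end RaagPaper
end
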